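/- Let A be a symmetric positive definite n×n matrix and A₁,…,A_m symmetric matrices with Σ_{i∈I} |Aᵢ| ⪯ I_n for a subset I ⊆ [m] such that tr[A⁻¹|Aᵢ|] ≤ (2/(α²m))·tr[A⁻¹] for all i ∈ I. Then Σ_{i∈I} tr[A⁻¹ Aᵢ A⁻¹ Aᵢ A⁻¹] ≤ (2/(α²m))·tr[A⁻¹]·tr[A⁻²]. -/

import Mathlib

/-! Diagonalize `B = U D Uᴴ`. In the eigenbasis, with `P' = Uᴴ P U` and `Q' = Uᴴ Q U`,
`tr[P B Q B] = ∑ₖ ∑ₗ P'ₖₗ dₗ Q'ₗₖ dₖ`. The `2 × 2` minors of `P'` and `Q'` bound each term by the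
geometric mean of `aₖ bₗ` and `aₗ bₖ`, where `aₖ = P'ₖₖ |dₖ|` and `bₖ = Q'ₖₖ |dₖ|`, so the sum is
at most `(∑ a) (∑ b) = tr[P |B|] tr[Q |B|]`. Applied with `P = A⁻²`, `Q = A⁻¹`, each summand of
the theorem is at most `tr[A⁻² |Bᵢ|] · (2 / (α² m)) tr[A⁻¹]`, and `∑ᵢ |Bᵢ| ≤ 1` bounds
`∑ᵢ tr[A⁻² |Bᵢ|]` by `tr[A⁻²]`. -/

open Matrix

/-- `|B|`: the matrix obtained by replacing each eigenvalue of the symmetric matrix `B`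
by its absolute value, realized as the PSD square root of `Bᴴ * B`. -/
noncomputable def matAbs {n : ℕ} (B : Matrix (Fin n) (Fin n) ℝ) : Matrix (Fin n) (Fin n) ℝ :=
  (Matrix.posSemidef_conjTranspose_mul_self B).1.eigenvectorUnitary.1 *
    diagonal ((↑) ∘ (√·) ∘ (Matrix.posSemidef_conjTranspose_mul_self B).1.eigenvalues) *
    (star (Matrix.posSemidef_conjTranspose_mul_self B).1.eigenvectorUnitary : Matrix (Fin n) (Fin n) ℝ)

/-- operator norm (largest singular value) of a matrix. -/
noncomputable def opNorm {n : ℕ} (M : Matrix (Fin n) (Fin n) ℝ) : ℝ :=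
  ‖Matrix.toEuclideanCLM (𝕜 := ℝ) M‖

open scoped MatrixOrder ComplexOrder

namespace Matrix

lemma PosSemidef.sq_apply_le {ι : Type*} {P : Matrix ι ι ℝ} (hP : P.PosSemidef) (k l : ι) :
    P k l ^ 2 ≤ P k k * P l l := by
  have hdet := (hP.submatrix ![k, l]).det_nonneg
  rw [det_fin_two] at hdet
  have hsymm : P l k = P k l := by simpa using congrFun (congrFun hP.1 k) l
  simp only [submatrix_apply, Matrix.cons_val_zero, Matrix.cons_val_one, hsymm] at hdet
  nlinarith

variable {ι 𝕜 : Type*} [Fintype ι] [DecidableEq ι] [RCLike 𝕜]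

lemma PosSemidef.trace_mul_nonneg {P Q : Matrix ι ι 𝕜} (hP : P.PosSemidef)
    (hQ : Q.PosSemidef) : 0 ≤ (P * Q).trace := by
  obtain ⟨C, rfl⟩ := CStarAlgebra.nonneg_iff_eq_star_mul_self.mp hQ.nonneg
  rw [← mul_assoc, trace_mul_comm, star_eq_conjTranspose, ← mul_assoc]
  exact (hP.mul_mul_conjTranspose_same C).trace_nonneg

lemma PosSemidef.trace_mul_le_trace_mul {P S T : Matrix ι ι 𝕜} (hP : P.PosSemidef)
    (hST : (T - S).PosSemidef) : (P * S).trace ≤ (P * T).trace := by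
  simpa [mul_sub, trace_sub] using hP.trace_mul_nonneg hST

lemma trace_conjStarAlgAut {R : Type*} [CommRing R] [StarRing R] (U : unitary (Matrix ι ι R))
    (X : Matrix ι ι R) : (Unitary.conjStarAlgAut R _ U X).trace = X.trace := by
  rw [Unitary.conjStarAlgAut_apply, trace_mul_cycle, Unitary.coe_star_mul_self, one_mul]

lemma IsHermitian.cfcAbs_eq {B : Matrix ι ι 𝕜} (hB : B.IsHermitian) :
    CFC.abs B = Unitary.conjStarAlgAut 𝕜 _ hB.eigenvectorUnitary
      (diagonal (RCLike.ofReal ∘ (|·|) ∘ hB.eigenvalues)) := by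
  rw [CFC.abs_eq_cfc_norm B, hB.cfc_eq]
  rfl

lemma trace_mul_diagonal_mul_mul_diagonal_le {P Q : Matrix ι ι ℝ} (hP : P.PosSemidef)
    (hQ : Q.PosSemidef) (d : ι → ℝ) :
    (P * diagonal d * Q * diagonal d).trace ≤
      (P * diagonal fun k => |d k|).trace * (Q * diagonal fun k => |d k|).trace := by
  set a : ι → ℝ := fun k => P k k * |d k|
  set b : ι → ℝ := fun k => Q k k * |d k|
  have ha : ∀ k, 0 ≤ a k := fun k => mul_nonneg hP.diag_nonneg (abs_nonneg _)
  have hb : ∀ k, 0 ≤ b k := fun k => mul_nonneg hQ.diag_nonneg (abs_nonneg _)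
  have hterm : ∀ k l, P k l * d l * Q l k * d k ≤ (a k * b l + a l * b k) / 2 := by
    intro k l
    have hsq : (P k l * d l * Q l k * d k) ^ 2 ≤ (a k * b l) * (a l * b k) := by
      calc (P k l * d l * Q l k * d k) ^ 2
          = P k l ^ 2 * Q l k ^ 2 * (|d k| ^ 2 * |d l| ^ 2) := by simp only [sq_abs]; ring
        _ ≤ P k k * P l l * (Q l l * Q k k) * (|d k| ^ 2 * |d l| ^ 2) := by
          gcongr
          · exact mul_nonneg hP.diag_nonneg hP.diag_nonneg
          · exact hP.sq_apply_le k l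
          · exact hQ.sq_apply_le l k
        _ = (a k * b l) * (a l * b k) := by ring
    nlinarith [sq_nonneg (a k * b l - a l * b k), mul_nonneg (ha k) (hb l),
      mul_nonneg (ha l) (hb k)]
  calc (P * diagonal d * Q * diagonal d).trace
      = ∑ k, ∑ l, P k l * d l * Q l k * d k := by
        simp only [trace, diag, mul_diagonal, mul_apply (M := P * diagonal d), Finset.sum_mul]
    _ ≤ ∑ k, ∑ l, (a k * b l + a l * b k) / 2 := by gcongr with k _ l _; exact hterm k l
    _ = (∑ k, a k) * (∑ l, b l) := by
        simp only [add_div, Finset.sum_add_distrib, Finset.sum_mul_sum]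
        rw [Finset.sum_comm (f := fun k l => a l * b k / 2), ← Finset.sum_add_distrib]
        simp only [← Finset.sum_add_distrib, add_halves]
    _ = (P * diagonal fun k => |d k|).trace * (Q * diagonal fun k => |d k|).trace := by
        simp [trace, a, b]

lemma trace_mul_mul_mul_le_cfcAbs {P Q B : Matrix ι ι ℝ} (hP : P.PosSemidef)
    (hQ : Q.PosSemidef) (hB : B.IsHermitian) :
    (P * B * Q * B).trace ≤ (P * CFC.abs B).trace * (Q * CFC.abs B).trace := by
  set φ := Unitary.conjStarAlgAut ℝ (Matrix ι ι ℝ) hB.eigenvectorUnitary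
  have hconj : ∀ {X : Matrix ι ι ℝ}, X.PosSemidef → ∃ X', X'.PosSemidef ∧ φ X' = X :=
    fun {X} hX => ⟨φ.symm X, hX.conjTranspose_mul_mul_same _, φ.apply_symm_apply X⟩
  obtain ⟨P', hP', rfl⟩ := hconj hP
  obtain ⟨Q', hQ', rfl⟩ := hconj hQ
  set d := hB.eigenvalues
  have hB_eq : B = φ (diagonal d) := by simpa [φ] using hB.spectral_theorem
  have habs_eq : CFC.abs B = φ (diagonal fun k => |d k|) := by
    simpa [φ, Function.comp_def] using hB.cfcAbs_eq
  have hprod : φ P' * B * φ Q' * B = φ (P' * diagonal d * Q' * diagonal d) := by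
    simp only [map_mul, ← hB_eq]
  rw [hprod, habs_eq, ← map_mul, ← map_mul, trace_conjStarAlgAut, trace_conjStarAlgAut,
    trace_conjStarAlgAut]
  exact trace_mul_diagonal_mul_mul_diagonal_le hP' hQ' d

end Matrix

lemma matAbs_eq_cfcAbs {n : ℕ} (B : Matrix (Fin n) (Fin n) ℝ) : matAbs B = CFC.abs B := by
  have hBB := posSemidef_conjTranspose_mul_self B
  rw [CFC.abs, star_eq_conjTranspose, CFC.sqrt_eq_real_sqrt _ hBB.nonneg, cfcₙ_eq_cfc,
    hBB.1.cfc_eq]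
  rfl

theorem sum_trace_quadratic_bound_general {n m : ℕ} (A : Matrix (Fin n) (Fin n) ℝ) (hA : A.PosDef)
    (B : Fin m → Matrix (Fin n) (Fin n) ℝ) (hsymm : ∀ i, (B i).IsSymm)
    (α : ℝ) (I : Finset (Fin m))
    (hsum : (1 - ∑ i ∈ I, matAbs (B i)).PosSemidef)
    (htr : ∀ i ∈ I, (A⁻¹ * matAbs (B i)).trace ≤ 2 / (α ^ 2 * m) * (A⁻¹).trace) :
    ∑ i ∈ I, (A⁻¹ * B i * A⁻¹ * B i * A⁻¹).trace ≤
      2 / (α ^ 2 * m) * (A⁻¹).trace * (A⁻¹ * A⁻¹).trace := by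
  simp only [matAbs_eq_cfcAbs] at hsum htr
  set c : ℝ := 2 / (α ^ 2 * m)
  have hQ : (A⁻¹).PosSemidef := hA.inv.posSemidef
  have hP : (A⁻¹ * A⁻¹).PosSemidef := by simpa [sq] using hQ.pow 2
  have hterm : ∀ i ∈ I, (A⁻¹ * B i * A⁻¹ * B i * A⁻¹).trace ≤
      (A⁻¹ * A⁻¹ * CFC.abs (B i)).trace * (c * (A⁻¹).trace) := fun i hi =>
    calc (A⁻¹ * B i * A⁻¹ * B i * A⁻¹).trace = (A⁻¹ * A⁻¹ * B i * A⁻¹ * B i).trace := by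
          rw [trace_mul_comm]; simp only [← mul_assoc]
      _ ≤ (A⁻¹ * A⁻¹ * CFC.abs (B i)).trace * (A⁻¹ * CFC.abs (B i)).trace :=
          trace_mul_mul_mul_le_cfcAbs hP hQ (isHermitian_iff_isSymm.mpr (hsymm i))
      _ ≤ (A⁻¹ * A⁻¹ * CFC.abs (B i)).trace * (c * (A⁻¹).trace) :=
          mul_le_mul_of_nonneg_left (htr i hi) (hP.trace_mul_nonneg (CFC.abs_nonneg _).posSemidef)
  have hmass : ∑ i ∈ I, (A⁻¹ * A⁻¹ * CFC.abs (B i)).trace ≤ (A⁻¹ * A⁻¹).trace := by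
    simpa [Finset.mul_sum, trace_sum] using hP.trace_mul_le_trace_mul hsum
  calc ∑ i ∈ I, (A⁻¹ * B i * A⁻¹ * B i * A⁻¹).trace
      ≤ (∑ i ∈ I, (A⁻¹ * A⁻¹ * CFC.abs (B i)).trace) * (c * (A⁻¹).trace) := by
        rw [Finset.sum_mul]; exact Finset.sum_le_sum hterm
    _ ≤ (A⁻¹ * A⁻¹).trace * (c * (A⁻¹).trace) :=
        mul_le_mul_of_nonneg_right hmass (mul_nonneg (by positivity) hQ.trace_nonneg)
    _ = c * (A⁻¹).trace * (A⁻¹ * A⁻¹).trace := by ring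

theorem sum_trace_quadratic_bound {n m : ℕ} (A : Matrix (Fin n) (Fin n) ℝ) (hA : A.PosDef)
    (B : Fin m → Matrix (Fin n) (Fin n) ℝ) (hsymm : ∀ i, (B i).IsSymm)
    (α : ℝ) (hα : α ∈ Set.Ioo (0 : ℝ) 1) (I : Finset (Fin m))
    (hsum : (1 - ∑ i ∈ I, matAbs (B i)).PosSemidef)
    (htr : ∀ i ∈ I, (A⁻¹ * matAbs (B i)).trace ≤ 2 / (α ^ 2 * m) * (A⁻¹).trace) :
    ∑ i ∈ I, (A⁻¹ * B i * A⁻¹ * B i * A⁻¹).trace ≤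
      2 / (α ^ 2 * m) * (A⁻¹).trace * (A⁻¹ * A⁻¹).trace :=
  sum_trace_quadratic_bound_general A hA B hsymm α I hsum htr
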